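/- arXiv:math/0702730 — 5 statements merged into one kernel-verified Lean document; each statement's English description precedes it below -/
import Mathlib

section
/- For n ≥ 4, the Lie algebras L_n and Q_n (when n is even, n ≥ 6) are not isomorphic. -/
open Finset

/-- The `k`-th standard basis vector of `ℂⁿ` (zero if `k ≥ n`). -/
noncomputable def E (n k : ℕ) : Fin n → ℂ := fun t => if (t : ℕ) = k then 1 else 0

/-- The bilinear bracket on `ℂⁿ` determined by structure constants `s`, antisymmetrized:
`[e_i, e_j] = s i j - s j i`. -/
noncomputable def brkt (n : ℕ) (s : ℕ → ℕ → Fin n → ℂ) (x y : Fin n → ℂ) : Fin n → ℂ :=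
  ∑ i : Fin n, ∑ j : Fin n, (x i * y j) • (s (i : ℕ) (j : ℕ) - s (j : ℕ) (i : ℕ))

/-- Structure constants of the filiform Lie algebra `Lₙ`: `[X₀, Xᵢ] = X_{i+1}` for `1 ≤ i ≤ n-2`. -/
noncomputable def sL (n : ℕ) : ℕ → ℕ → Fin n → ℂ := fun i j =>
  if i = 0 ∧ 1 ≤ j ∧ j ≤ n - 2 then E n (j + 1) else 0

/-- Structure constants of `Q_n` (`n = 2m`): `[X₀,Xᵢ] = X_{i+1}` for `1 ≤ i ≤ n-3` and
`[Xⱼ, X_{n-j-1}] = (-1)^{j-1} X_{n-1}` for `1 ≤ j ≤ m-1`. -/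
noncomputable def sQ (n m : ℕ) : ℕ → ℕ → Fin n → ℂ := fun i j =>
  (if i = 0 ∧ 1 ≤ j ∧ j ≤ n - 3 then E n (j + 1) else 0) +
  (if 1 ≤ i ∧ i ≤ m - 1 ∧ j = n - i - 1 then ((-1 : ℂ) ^ (i - 1)) • E n (n - 1) else 0)


/-!
The derived algebra of `Lₙ` lies in the span of `X₂, …, X_{n-1}`, on which the bracket of `Lₙ`
vanishes, so `[[Lₙ, Lₙ], [Lₙ, Lₙ]] = 0`. In `Q_n` the elements `X₂ = [X₀, X₁]` and
`X_{n-3} = [X₀, X_{n-4}]` of the derived algebra satisfy `[X₂, X_{n-3}] = -X_{n-1} ≠ 0`.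
-/

def IsMetabelian {V : Type*} [Zero V] (br : V → V → V) : Prop :=
  ∀ a b c d, br (br a b) (br c d) = 0

theorem IsMetabelian.of_surjective {V W : Type*} [Zero V] [Zero W]
    {brV : V → V → V} {brW : W → W → W} (h : IsMetabelian brV) (e : V → W) (he0 : e 0 = 0)
    (he : ∀ x y, e (brV x y) = brW (e x) (e y)) (hsurj : Function.Surjective e) :
    IsMetabelian brW := by
  intro a b c d
  obtain ⟨a, rfl⟩ := hsurj a
  obtain ⟨b, rfl⟩ := hsurj b
  obtain ⟨c, rfl⟩ := hsurj c
  obtain ⟨d, rfl⟩ := hsurj d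
  rw [← he, ← he, ← he, h, he0]

theorem brkt_E (n : ℕ) (s : ℕ → ℕ → Fin n → ℂ) {a b : ℕ} (ha : a < n) (hb : b < n) :
    brkt n s (E n a) (E n b) = s a b - s b a := by
  unfold brkt
  rw [Fintype.sum_eq_single ⟨a, ha⟩]
  · rw [Fintype.sum_eq_single ⟨b, hb⟩]
    · simp [E]
    · intro j hj
      simp [E, Fin.val_ne_iff.mpr hj]
  · intro i hi
    refine sum_eq_zero fun j _ => ?_
    simp [E, Fin.val_ne_iff.mpr hi]

theorem brkt_apply_eq_zero (n : ℕ) (s : ℕ → ℕ → Fin n → ℂ) (t : Fin n)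
    (hs : ∀ i j, s i j t = 0) (x y : Fin n → ℂ) : brkt n s x y t = 0 := by
  simp [brkt, Finset.sum_apply, hs]

theorem brkt_sL_apply_zero (n : ℕ) (t : Fin n) (ht : (t : ℕ) = 0) (x y : Fin n → ℂ) :
    brkt n (sL n) x y t = 0 :=
  brkt_apply_eq_zero n _ t (fun i j => by unfold sL; split_ifs <;> simp [E, ht]) x y

theorem brkt_sL_eq_zero (n : ℕ) {x y : Fin n → ℂ}
    (hx : ∀ i : Fin n, (i : ℕ) = 0 → x i = 0) (hy : ∀ i : Fin n, (i : ℕ) = 0 → y i = 0) :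
    brkt n (sL n) x y = 0 := by
  refine sum_eq_zero fun i _ => sum_eq_zero fun j _ => ?_
  by_cases hi : (i : ℕ) = 0
  · simp [hx i hi]
  by_cases hj : (j : ℕ) = 0
  · simp [hy j hj]
  simp [sL, hi, hj]

theorem isMetabelian_brkt_sL (n : ℕ) : IsMetabelian (brkt n (sL n)) := fun a b c d =>
  brkt_sL_eq_zero n (fun i hi => brkt_sL_apply_zero n i hi a b)
    (fun i hi => brkt_sL_apply_zero n i hi c d)

theorem not_isMetabelian_brkt_sQ (n m : ℕ) (hm : 3 ≤ m) (hn : n = 2 * m) :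
    ¬ IsMetabelian (brkt n (sQ n m)) := by
  intro h
  have hX2 : brkt n (sQ n m) (E n 0) (E n 1) = E n 2 := by
    rw [brkt_E n _ (by omega) (by omega), sQ, sQ,
      if_pos (by omega), if_neg (by omega), if_neg (by omega), if_neg (by omega)]
    simp
  have hXn3 : brkt n (sQ n m) (E n 0) (E n (n - 4)) = E n (n - 3) := by
    rw [brkt_E n _ (by omega) (by omega), sQ, sQ,
      if_pos (by omega), if_neg (by omega), if_neg (by omega), if_neg (by omega),
      show n - 4 + 1 = n - 3 by omega]
    simp
  have hXn1 : brkt n (sQ n m) (E n 2) (E n (n - 3)) = -E n (n - 1) := by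
    rw [brkt_E n _ (by omega) (by omega), sQ, sQ,
      if_neg (by omega), if_pos (by omega), if_neg (by omega), if_neg (by omega)]
    simp
  have := congrFun (h (E n 0) (E n 1) (E n 0) (E n (n - 4))) ⟨n - 1, by omega⟩
  simp [hX2, hXn3, hXn1, E] at this

/-- for even `n = 2m ≥ 6`, the Lie algebras `Lₙ` and `Q_n` are not isomorphic. -/
theorem stmt_4 (n m : ℕ) (hm : 3 ≤ m) (hn : n = 2 * m) :
    ¬ ∃ e : (Fin n → ℂ) ≃ₗ[ℂ] (Fin n → ℂ),
        ∀ x y, e (brkt n (sL n) x y) = brkt n (sQ n m) (e x) (e y) := by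
  rintro ⟨e, he⟩
  exact not_isMetabelian_brkt_sQ n m hm hn
    ((isMetabelian_brkt_sL n).of_surjective e (map_zero e) he e.surjective)
end

section
/- On the Lie algebra L_n (n ≥ 3), for any scalars λ_0, λ_1 ∈ ℂ, the linear map f defined on the basis by f(X_0) = λ_0 X_0, f(X_i) = ((i-1)λ_0 + λ_1) X_i for 1 ≤ i ≤ n-1 is a derivation. Consequently L_n admits a 2-dimensional abelian subalgebra of diagonal derivations, so rank(L_n) ≥ 2. -/
/-!
Give `X₀` the weight `λ₀` and `Xᵢ` (`i ≥ 1`) the weight `(i-1)λ₀ + λ₁`. The only nonzero bracket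
`[X₀, Xᵢ] = X_{i+1}` is then homogeneous, as `λ₀ + ((i-1)λ₀ + λ₁) = iλ₀ + λ₁`, and scaling each
basis vector by its weight in a grading of the bracket is a derivation. Diagonal maps commute, and
`(1,0)`, `(0,1)` give independent maps, as seen on `X₀` and `X₁`.
-/

open Finset

/-- The diagonal map `f(X₀) = λ₀X₀`, `f(Xᵢ) = ((i-1)λ₀ + λ₁)Xᵢ` for `1 ≤ i ≤ n-1`. -/
noncomputable def dL (n : ℕ) (l0 l1 : ℂ) (x : Fin n → ℂ) : Fin n → ℂ := fun t =>
  (if (t : ℕ) = 0 then l0 else (((t : ℕ) - 1 : ℕ) : ℂ) * l0 + l1) * x t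

def diagWeight (l0 l1 : ℂ) (k : ℕ) : ℂ :=
  if k = 0 then l0 else ((k - 1 : ℕ) : ℂ) * l0 + l1

lemma dL_apply (n : ℕ) (l0 l1 : ℂ) (x : Fin n → ℂ) (t : Fin n) :
    dL n l0 l1 x t = diagWeight l0 l1 t * x t :=
  rfl

lemma diagWeight_succ (l0 l1 : ℂ) {j : ℕ} (hj : 1 ≤ j) :
    diagWeight l0 l1 (j + 1) = diagWeight l0 l1 0 + diagWeight l0 l1 j := by
  obtain ⟨k, rfl⟩ := Nat.exists_eq_add_of_le' hj
  simp only [diagWeight, Nat.add_sub_cancel, if_true, Nat.add_one_ne_zero, if_false]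
  push_cast
  ring

lemma brkt_diagonal_derivation {n : ℕ} (s : ℕ → ℕ → Fin n → ℂ) (w : ℕ → ℂ)
    (hs : ∀ (i j : ℕ) (t : Fin n), w t * s i j t = (w i + w j) * s i j t) (x y : Fin n → ℂ) :
    (fun t : Fin n => w t * brkt n s x y t)
      = brkt n s (fun t => w t * x t) y + brkt n s x (fun t => w t * y t) := by
  funext t
  simp only [brkt, Finset.sum_apply, Pi.smul_apply, Pi.sub_apply, smul_eq_mul, Pi.add_apply,
    Finset.mul_sum, ← Finset.sum_add_distrib]
  refine Finset.sum_congr rfl fun i _ => Finset.sum_congr rfl fun j _ => ?_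
  linear_combination (x i * y j) * (hs i j t - hs j i t)

lemma sL_homogeneous (n : ℕ) (l0 l1 : ℂ) (i j : ℕ) (t : Fin n) :
    diagWeight l0 l1 t * sL n i j t
      = (diagWeight l0 l1 i + diagWeight l0 l1 j) * sL n i j t := by
  unfold sL
  split_ifs with hij
  · obtain ⟨rfl, hj, -⟩ := hij
    by_cases ht : (t : ℕ) = j + 1
    · rw [ht, diagWeight_succ l0 l1 hj]
    · simp [E, ht]
  · simp

lemma dL_isDerivation (n : ℕ) (l0 l1 : ℂ) (x y : Fin n → ℂ) :
    dL n l0 l1 (brkt n (sL n) x y)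
      = brkt n (sL n) (dL n l0 l1 x) y + brkt n (sL n) x (dL n l0 l1 y) :=
  brkt_diagonal_derivation (sL n) (diagWeight l0 l1) (sL_homogeneous n l0 l1) x y

lemma dL_comp_comm (n : ℕ) (a0 a1 b0 b1 : ℂ) :
    dL n a0 a1 ∘ dL n b0 b1 = dL n b0 b1 ∘ dL n a0 a1 := by
  funext x t
  simp only [Function.comp_apply, dL_apply]
  ring

lemma linearIndependent_dL (n : ℕ) (hn : 2 ≤ n) :
    LinearIndependent ℂ ![dL n 1 0, dL n 0 1] := by
  rw [LinearIndependent.pair_iff]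
  intro a b h
  have h0 := congrFun (congrFun h (E n 0)) ⟨0, by omega⟩
  have h1 := congrFun (congrFun h (E n 1)) ⟨1, by omega⟩
  simpa [dL, E] using And.intro h0 h1

/-- on `Lₙ` (`n ≥ 3`), for all `λ₀, λ₁ ∈ ℂ` the diagonal map `dL n λ₀ λ₁` is a
derivation; moreover the derivations for `(λ₀,λ₁) = (1,0)` and `(0,1)` commute and are linearly
independent, giving a 2-dimensional abelian algebra of diagonal derivations, so `rank Lₙ ≥ 2`. -/
theorem stmt_5 (n : ℕ) (hn : 3 ≤ n) :
    (∀ l0 l1 : ℂ, ∀ x y : Fin n → ℂ,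
        dL n l0 l1 (brkt n (sL n) x y)
          = brkt n (sL n) (dL n l0 l1 x) y + brkt n (sL n) x (dL n l0 l1 y)) ∧
    (dL n 1 0 ∘ dL n 0 1 = dL n 0 1 ∘ dL n 1 0) ∧
    LinearIndependent ℂ ![dL n 1 0, dL n 0 1] :=
  ⟨dL_isDerivation n, dL_comp_comm n 1 0 0 1, linearIndependent_dL n (by omega)⟩
end

section
/- On the Lie algebra Q_n (n = 2m, m ≥ 3), for any λ_0, λ_1 ∈ ℂ, the linear map f defined by f(X_0) = λ_0 X_0, f(X_i) = ((i-1)λ_0 + λ_1) X_i for 1 ≤ i ≤ n-2, and f(X_{n-1}) = ((n-3)λ_0 + 2λ_1) X_{n-1} is a derivation of Q_n. -/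
open Finset

/-- The diagonal map `f(X₀)=λ₀X₀`, `f(Xᵢ)=((i-1)λ₀+λ₁)Xᵢ` for `1 ≤ i ≤ n-2`,
`f(X_{n-1}) = ((n-3)λ₀ + 2λ₁) X_{n-1}`. -/
noncomputable def dQ (n : ℕ) (l0 l1 : ℂ) (x : Fin n → ℂ) : Fin n → ℂ := fun t =>
  (if (t : ℕ) = 0 then l0
   else if (t : ℕ) = n - 1 then ((n - 3 : ℕ) : ℂ) * l0 + 2 * l1
   else (((t : ℕ) - 1 : ℕ) : ℂ) * l0 + l1) * x t

/-!
A diagonal map `X_k ↦ w(k) X_k` is a derivation exactly when every structure constant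
`[X_i, X_j] ∋ X_k` satisfies `w(k) = w(i) + w(j)`. For `Q_n` this amounts to
`w(j+1) = w(0) + w(j)` and `w(n-1) = w(i) + w(n-1-i)`, both immediate from the linear form
of the weights.
-/

noncomputable def dQWeight (n : ℕ) (l0 l1 : ℂ) (k : ℕ) : ℂ :=
  if k = 0 then l0
  else if k = n - 1 then ((n - 3 : ℕ) : ℂ) * l0 + 2 * l1
  else ((k - 1 : ℕ) : ℂ) * l0 + l1

theorem brkt_leibniz_of_weights {n : ℕ} (s : ℕ → ℕ → Fin n → ℂ) (c : ℕ → ℂ)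
    (hc : ∀ i j t : Fin n, c t * s i j t = (c i + c j) * s i j t) (x y : Fin n → ℂ) :
    (fun t : Fin n => c t * brkt n s x y t)
      = brkt n s (fun t => c t * x t) y + brkt n s x (fun t => c t * y t) := by
  funext t
  simp only [brkt, Pi.add_apply, Finset.sum_apply, Pi.smul_apply, Pi.sub_apply, smul_eq_mul,
    mul_sum, ← sum_add_distrib]
  refine sum_congr rfl fun i _ => sum_congr rfl fun j _ => ?_
  linear_combination (x i * y j) * (hc i j t - hc j i t)

lemma dQWeight_succ (n : ℕ) (l0 l1 : ℂ) {j : ℕ} (hj : 1 ≤ j) (hjn : j + 3 ≤ n) :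
    dQWeight n l0 l1 (j + 1) = dQWeight n l0 l1 0 + dQWeight n l0 l1 j := by
  obtain ⟨k, rfl⟩ : ∃ k, j = k + 1 := ⟨j - 1, by omega⟩
  simp only [dQWeight, if_neg (show k + 1 ≠ n - 1 by omega), if_neg (show k + 2 ≠ n - 1 by omega),
    Nat.add_sub_cancel, add_eq_zero, one_ne_zero, and_false, if_false]
  push_cast
  ring

lemma dQWeight_last (n : ℕ) (l0 l1 : ℂ) {i j : ℕ} (hi : 1 ≤ i) (hj : 1 ≤ j)
    (hij : i + j + 1 = n) :
    dQWeight n l0 l1 (n - 1) = dQWeight n l0 l1 i + dQWeight n l0 l1 j := by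
  simp only [dQWeight, if_neg (show i ≠ 0 by omega), if_neg (show i ≠ n - 1 by omega),
    if_neg (show j ≠ 0 by omega), if_neg (show j ≠ n - 1 by omega),
    if_neg (show n - 1 ≠ 0 by omega), show n - 3 = (i - 1) + (j - 1) by omega]
  push_cast
  ring

lemma dQWeight_mul_sQ {n m : ℕ} (hn : n = 2 * m) (l0 l1 : ℂ) (i j t : Fin n) :
    dQWeight n l0 l1 t * sQ n m i j t
      = (dQWeight n l0 l1 i + dQWeight n l0 l1 j) * sQ n m i j t := by
  simp only [sQ, Pi.add_apply, mul_add]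
  congr 1
  · split_ifs with h
    · simp only [E]
      split_ifs with ht
      · rw [ht, h.1, dQWeight_succ n l0 l1 h.2.1 (by omega)]
      · simp
    · simp
  · split_ifs with h
    · simp only [E, Pi.smul_apply, smul_eq_mul]
      split_ifs with ht
      · rw [ht, dQWeight_last n l0 l1 h.1 (j := j) (by omega) (by omega)]
      · simp
    · simp

theorem stmt_6_general (n m : ℕ) (hn : n = 2 * m) (l0 l1 : ℂ) :
    ∀ x y : Fin n → ℂ,
      dQ n l0 l1 (brkt n (sQ n m) x y)
        = brkt n (sQ n m) (dQ n l0 l1 x) y + brkt n (sQ n m) x (dQ n l0 l1 y) :=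
  brkt_leibniz_of_weights (sQ n m) (dQWeight n l0 l1) (dQWeight_mul_sQ hn l0 l1)

/-- on `Q_n` (`n = 2m`, `m ≥ 3`), the map `dQ n λ₀ λ₁` is a derivation. -/
theorem stmt_6 (n m : ℕ) (hm : 3 ≤ m) (hn : n = 2 * m) (l0 l1 : ℂ) :
    ∀ x y : Fin n → ℂ,
      dQ n l0 l1 (brkt n (sQ n m) x y)
        = brkt n (sQ n m) (dQ n l0 l1 x) y + brkt n (sQ n m) x (dQ n l0 l1 y) :=
  stmt_6_general n m hn l0 l1
end

section
/- For n ≥ 5 and odd r with 3 ≤ r ≤ 2⌊(n-1)/2⌋ - 1, the bracket on basis {X_0,...,X_{n-1}} given by [X_0, X_i] = X_{i+1} for i = 1,...,n-3 and [X_i, X_{r-i}] = (-1)^{i-1} X_{n-1} for i = 1,...,(r-1)/2 satisfies the Jacobi identity, so defines a Lie algebra L_{n,r}. -/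
open Finset

/-- Structure constants of `L_{n,r}`: `[X₀, Xᵢ] = X_{i+1}` for `1 ≤ i ≤ n-3` and
`[Xᵢ, X_{r-i}] = (-1)^{i-1} X_{n-1}` for `1 ≤ i ≤ (r-1)/2`. -/
noncomputable def sLnr (n r : ℕ) : ℕ → ℕ → Fin n → ℂ := fun i j =>
  (if i = 0 ∧ 1 ≤ j ∧ j ≤ n - 3 then E n (j + 1) else 0) +
  (if 1 ≤ i ∧ i ≤ (r - 1) / 2 ∧ j = r - i then ((-1 : ℂ) ^ (i - 1)) • E n (n - 1) else 0)

/-! Bilinearity reduces the Jacobi identity to basis triples. As `X_{n-1}` is central, a double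
bracket `[X_i, [X_j, X_k]]` can only be nonzero through `[X_0, ·]`, so the identity comes down to
`[X_i, [X_0, X_k]] = [X_k, [X_0, X_i]]` for `i, k ≥ 1`. Both sides are `(-1)^(i-1) X_{n-1}` when
`i + k + 1 = r` and vanish otherwise, and the signs agree because `r` odd forces `i ≡ k (mod 2)`. -/

lemma sum_sum_sum_rotate {ι M : Type*} [Fintype ι] [AddCommMonoid M] (F : ι → ι → ι → M) :
    ∑ i, ∑ j, ∑ k, F i j k = ∑ i, ∑ j, ∑ k, F j k i :=
  (sum_congr rfl fun _ _ => sum_comm).trans sum_comm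

lemma sum_E_smul {n m : ℕ} {M : Type*} [AddCommMonoid M] [Module ℂ M] (hm : m < n)
    (w : ℕ → M) : ∑ a : Fin n, E n m a • w a = w m := by
  rw [Fintype.sum_eq_single ⟨m, hm⟩ fun a ha => by simp [E, Fin.val_ne_iff.mpr ha]]
  simp [E]

section StructureConstants

variable {n : ℕ} (s : ℕ → ℕ → Fin n → ℂ)

noncomputable def bracketConst (p q : ℕ) : Fin n → ℂ :=
  s p q - s q p

/-- The coordinates of `[X_i, [X_j, X_k]]`. -/
noncomputable def nestedConst (i j k : ℕ) : Fin n → ℂ :=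
  ∑ a : Fin n, bracketConst s j k a • bracketConst s i a

lemma brkt_brkt (x y z : Fin n → ℂ) :
    brkt n s x (brkt n s y z) =
      ∑ i : Fin n, ∑ j : Fin n, ∑ k : Fin n, (x i * y j * z k) • nestedConst s i j k := by
  ext t
  simp only [brkt, nestedConst, bracketConst, Finset.sum_apply, Pi.smul_apply, smul_eq_mul,
    sum_mul, mul_sum]
  refine sum_congr rfl fun i _ => ?_
  rw [sum_comm]
  refine sum_congr rfl fun j _ => ?_
  rw [sum_comm]
  refine sum_congr rfl fun k _ => sum_congr rfl fun a _ => ?_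
  ring

theorem brkt_jacobi_of_nestedConst
    (h : ∀ i j k : Fin n, nestedConst s i j k + nestedConst s j k i + nestedConst s k i j = 0)
    (x y z : Fin n → ℂ) :
    brkt n s x (brkt n s y z) + brkt n s y (brkt n s z x) + brkt n s z (brkt n s x y) = 0 := by
  rw [brkt_brkt, brkt_brkt, brkt_brkt, sum_sum_sum_rotate (fun i j k => (y i * z j * x k) • _),
    ← sum_sum_sum_rotate (fun i j k => (z k * x i * y j) • nestedConst s k i j)]
  simp only [← sum_add_distrib]
  refine sum_eq_zero fun i _ => sum_eq_zero fun j _ => sum_eq_zero fun k _ => ?_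
  rw [show y j * z k * x i = x i * y j * z k by ring, show z k * x i * y j = x i * y j * z k by ring,
    ← smul_add, ← smul_add, h, smul_zero]

end StructureConstants

section Lnr

variable {n r : ℕ}

lemma bracketConst_sLnr_top (hrn : r ≤ n - 2) (i : ℕ) : bracketConst (sLnr n r) i (n - 1) = 0 := by
  simp only [bracketConst, sLnr]
  rw [if_neg (by omega), if_neg (by omega), if_neg (by omega), if_neg (by omega), sub_self]

lemma bracketConst_sLnr_of_pos (hr : Odd r) {p q : ℕ} (hp : 1 ≤ p) (hq : 1 ≤ q) :
    bracketConst (sLnr n r) p q = if p + q = r then (-1 : ℂ) ^ (p - 1) • E n (n - 1) else 0 := by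
  obtain ⟨m, rfl⟩ := hr
  simp only [bracketConst, sLnr]
  rw [if_neg (show ¬(p = 0 ∧ 1 ≤ q ∧ q ≤ n - 3) by omega),
    if_neg (show ¬(q = 0 ∧ 1 ≤ p ∧ p ≤ n - 3) by omega), zero_add, zero_add]
  split_ifs <;> try omega
  · rw [sub_zero]
  · have hsign : (-1 : ℂ) ^ (p - 1) = -(-1) ^ (q - 1) := by
      rw [neg_eq_neg_one_mul ((-1 : ℂ) ^ _), ← pow_succ', Nat.sub_add_cancel hq]
      exact neg_one_pow_congr (by simp only [Nat.even_iff]; omega)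
    rw [zero_sub, hsign, neg_smul]
  · rw [sub_zero]

/-- The coordinates of `[X_i, [X_0, X_k]]` in `L_{n,r}`. -/
noncomputable def adZeroConst (n r i k : ℕ) : Fin n → ℂ :=
  if 1 ≤ k ∧ k ≤ n - 3 then bracketConst (sLnr n r) i (k + 1) else 0

lemma adZeroConst_of_pos (hr : Odd r) (hrn : r ≤ n - 2) {i k : ℕ} (hi : 1 ≤ i) (hk : 1 ≤ k) :
    adZeroConst n r i k = if i + k + 1 = r then (-1 : ℂ) ^ (i - 1) • E n (n - 1) else 0 := by
  unfold adZeroConst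
  split_ifs <;> try omega
  · rw [bracketConst_sLnr_of_pos hr hi (by omega), if_pos (by omega)]
  · rw [bracketConst_sLnr_of_pos hr hi (by omega), if_neg (by omega)]
  · rfl

lemma adZeroConst_comm (hr : Odd r) (hrn : r ≤ n - 2) {i k : ℕ} (hi : 1 ≤ i) (hk : 1 ≤ k) :
    adZeroConst n r i k = adZeroConst n r k i := by
  rw [adZeroConst_of_pos hr hrn hi hk, adZeroConst_of_pos hr hrn hk hi]
  obtain ⟨m, rfl⟩ := hr
  split_ifs <;> try omega
  · rw [neg_one_pow_congr (m := i - 1) (n := k - 1) (by simp only [Nat.even_iff]; omega)]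
  · rfl

lemma sum_sLnr_smul (hrn : r ≤ n - 2) (i p q : ℕ) :
    ∑ a : Fin n, sLnr n r p q a • bracketConst (sLnr n r) i a =
      if p = 0 then adZeroConst n r i q else 0 := by
  simp only [sLnr, adZeroConst, Pi.add_apply, add_smul, sum_add_distrib]
  split_ifs <;> try omega
  · rw [sum_E_smul (by omega), sum_eq_zero fun _ _ => by simp, add_zero]
  · simp only [Pi.smul_apply, smul_eq_mul, mul_smul, ← smul_sum,
      sum_E_smul (by omega : n - 1 < n), bracketConst_sLnr_top hrn]
    simp
  · simp
  · simp

lemma nestedConst_sLnr (hrn : r ≤ n - 2) (i j k : ℕ) :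
    nestedConst (sLnr n r) i j k =
      (if j = 0 then adZeroConst n r i k else 0) - (if k = 0 then adZeroConst n r i j else 0) := by
  simp only [nestedConst, show bracketConst (sLnr n r) j k = sLnr n r j k - sLnr n r k j from rfl,
    Pi.sub_apply, sub_smul, sum_sub_distrib, sum_sLnr_smul hrn]

lemma jacobi_nestedConst_sLnr (hr : Odd r) (hrn : r ≤ n - 2) (i j k : ℕ) :
    nestedConst (sLnr n r) i j k + nestedConst (sLnr n r) j k i +
      nestedConst (sLnr n r) k i j = 0 := by
  simp only [nestedConst_sLnr hrn]
  by_cases hi : i = 0 <;> by_cases hj : j = 0 <;> by_cases hk : k = 0 <;>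
    simp only [hi, hj, hk, if_true, if_false] <;>
    first | abel1 | (rw [adZeroConst_comm hr hrn (by omega) (by omega)]; abel1)

end Lnr

theorem stmt_8_general (n r : ℕ) (hr : Odd r) (hrn : r ≤ 2 * ((n - 1) / 2) - 1) :
    ∀ x y z : Fin n → ℂ,
      brkt n (sLnr n r) x (brkt n (sLnr n r) y z) +
        brkt n (sLnr n r) y (brkt n (sLnr n r) z x) +
        brkt n (sLnr n r) z (brkt n (sLnr n r) x y) = 0 :=
  brkt_jacobi_of_nestedConst _ fun i j k => jacobi_nestedConst_sLnr hr (by omega) i j k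

/-- for `n ≥ 5` and odd `r` with `3 ≤ r ≤ 2⌊(n-1)/2⌋ - 1`, the bracket of
`L_{n,r}` satisfies the Jacobi identity. -/
theorem stmt_8 (n r : ℕ) (hn : 5 ≤ n) (hr : Odd r) (hr3 : 3 ≤ r)
    (hrn : r ≤ 2 * ((n - 1) / 2) - 1) :
    ∀ x y z : Fin n → ℂ,
      brkt n (sLnr n r) x (brkt n (sLnr n r) y z) +
        brkt n (sLnr n r) y (brkt n (sLnr n r) z x) +
        brkt n (sLnr n r) z (brkt n (sLnr n r) x y) = 0 :=
  stmt_8_general n r hr hrn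
end

section
/- The Lie algebra L_{n,r} (n ≥ 5, r odd, 3 ≤ r ≤ 2⌊(n-1)/2⌋-1) is nilpotent of nilindex exactly n-2, i.e. it is quasi-filiform. -/
/-! The chain `X_{k+1} = -[X_k, X_0]` puts `X_{n-2}` in `g_{n-2}`, so `g_{n-2} ≠ 0`. Conversely, a
bracket either moves one step up the chain `X_1, …, X_{n-2}` or lands in the centre `ℂ X_{n-1}`, so
`g_k ⊆ span {X_k, …, X_{n-1}}` for `k ≥ 2`. Since `r ≤ n - 2`, the pairs `[X_i, X_{r-i}]` only
involve indices below `n - 2`, so `X_{n-2}` and `X_{n-1}` are central and `g_{n-1} = 0`. -/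

open Finset

/-- Lower central series: `lcs 0 = ⊤` corresponds to `g₁ = g`, and
`lcs (k+1) = [lcs k, g]` corresponds to `g_{k+2}`. -/
noncomputable def lcs (n : ℕ) (s : ℕ → ℕ → Fin n → ℂ) : ℕ → Submodule ℂ (Fin n → ℂ)
  | 0 => ⊤
  | k + 1 => Submodule.span ℂ {w | ∃ x ∈ lcs n s k, ∃ y, w = brkt n s x y}

section Bracket

variable {n : ℕ} {s : ℕ → ℕ → Fin n → ℂ}

lemma brkt_apply (x y : Fin n → ℂ) (t : Fin n) :
    brkt n s x y t = ∑ i : Fin n, ∑ j : Fin n,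
      (x i * y j) * (s (i : ℕ) (j : ℕ) t - s (j : ℕ) (i : ℕ) t) := by
  simp [brkt, Finset.sum_apply, smul_eq_mul]

lemma E_apply_of_ne {k : ℕ} {t : Fin n} (h : (t : ℕ) ≠ k) : E n k t = 0 := if_neg h

lemma E_ne_zero {k : ℕ} (hk : k < n) : E n k ≠ 0 := fun h => by
  simpa [E] using congrFun h ⟨k, hk⟩

lemma brkt_E_E {i j : ℕ} (hi : i < n) (hj : j < n) :
    brkt n s (E n i) (E n j) = s i j - s j i := by
  unfold brkt
  rw [sum_eq_single_of_mem ⟨i, hi⟩ (mem_univ _) fun a _ ha => ?rows,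
    sum_eq_single_of_mem ⟨j, hj⟩ (mem_univ _) fun b _ hb => ?cols]
  · simp [E]
  case cols => simp [E_apply_of_ne (Fin.val_ne_of_ne hb)]
  case rows => simp [E_apply_of_ne (Fin.val_ne_of_ne ha)]

lemma brkt_mem_lcs_succ {k : ℕ} {x : Fin n → ℂ} (hx : x ∈ lcs n s k) (y : Fin n → ℂ) :
    brkt n s x y ∈ lcs n s (k + 1) :=
  Submodule.subset_span ⟨x, hx, y, rfl⟩

lemma lcs_succ_le {k : ℕ} {V : Submodule ℂ (Fin n → ℂ)}
    (h : ∀ x ∈ lcs n s k, ∀ y, brkt n s x y ∈ V) : lcs n s (k + 1) ≤ V :=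
  Submodule.span_le.mpr <| by
    rintro _ ⟨x, hx, y, rfl⟩
    exact h x hx y

end Bracket

section Lnr

variable {n r : ℕ}

lemma sLnr_apply (i j : ℕ) (t : Fin n) :
    sLnr n r i j t =
      (if i = 0 ∧ 1 ≤ j ∧ j ≤ n - 3 ∧ (t : ℕ) = j + 1 then 1 else 0) +
      (if 1 ≤ i ∧ i ≤ (r - 1) / 2 ∧ j = r - i ∧ (t : ℕ) = n - 1 then (-1 : ℂ) ^ (i - 1) else 0) := by
  simp only [sLnr, Pi.add_apply]
  congr 1 <;> split_ifs <;> simp_all [E]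

lemma brkt_E_E_zero {k : ℕ} (h1 : 1 ≤ k) (h2 : k ≤ n - 3) :
    brkt n (sLnr n r) (E n k) (E n 0) = -E n (k + 1) := by
  rw [brkt_E_E (by omega) (by omega)]
  funext t
  simp only [Pi.sub_apply, Pi.neg_apply, sLnr_apply, E, true_and]
  split_ifs <;> first | (exfalso; omega) | simp

lemma E_succ_mem_lcs {k : ℕ} (hk : k ≤ n - 3) : E n (k + 1) ∈ lcs n (sLnr n r) k := by
  induction k with
  | zero => exact Submodule.mem_top
  | succ k ih =>
    have h := brkt_mem_lcs_succ (ih (by omega)) (E n 0)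
    rw [brkt_E_E_zero (by omega) hk] at h
    simpa using neg_mem h

/-- `span {X_t | k ≤ t} ⊔ ℂ X_{n-1}`: the coordinate `n - 1` is never constrained. -/
def tail (n k : ℕ) : Submodule ℂ (Fin n → ℂ) where
  carrier := {x | ∀ t : Fin n, (t : ℕ) < k → (t : ℕ) < n - 1 → x t = 0}
  add_mem' ha hb t h1 h2 := by simp [ha t h1 h2, hb t h1 h2]
  zero_mem' _ _ _ := rfl
  smul_mem' c _ ha t h1 h2 := by simp [ha t h1 h2]

lemma brkt_mem_tail_two (x y : Fin n → ℂ) : brkt n (sLnr n r) x y ∈ tail n 2 := by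
  intro t ht1 ht2
  rw [brkt_apply]
  refine sum_eq_zero fun i _ => sum_eq_zero fun j _ => ?_
  rw [sLnr_apply, sLnr_apply]
  split_ifs <;> first | (exfalso; omega) | ring

lemma brkt_mem_tail_succ {k : ℕ} (hk : 1 ≤ k) {x : Fin n → ℂ} (hx : x ∈ tail n k)
    (y : Fin n → ℂ) : brkt n (sLnr n r) x y ∈ tail n (k + 1) := by
  intro t ht1 ht2
  rw [brkt_apply]
  refine sum_eq_zero fun i _ => sum_eq_zero fun j _ => ?_
  by_cases hi : (i : ℕ) < k ∧ (i : ℕ) < n - 1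
  · rw [hx i hi.1 hi.2]; ring
  · rw [sLnr_apply, sLnr_apply]
    split_ifs <;> first | (exfalso; omega) | ring

lemma brkt_eq_zero_of_mem_tail (hr : r ≤ n - 2) {x : Fin n → ℂ} (hx : x ∈ tail n (n - 2))
    (y : Fin n → ℂ) : brkt n (sLnr n r) x y = 0 := by
  funext t
  rw [brkt_apply]
  refine sum_eq_zero fun i _ => sum_eq_zero fun j _ => ?_
  by_cases hi : (i : ℕ) < n - 2
  · rw [hx i hi (by omega)]; ring
  · rw [sLnr_apply, sLnr_apply]
    split_ifs <;> first | (exfalso; omega) | ring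

lemma lcs_succ_le_tail (k : ℕ) : lcs n (sLnr n r) (k + 1) ≤ tail n (k + 2) := by
  induction k with
  | zero => exact lcs_succ_le fun x _ y => brkt_mem_tail_two x y
  | succ k ih => exact lcs_succ_le fun x hx y => brkt_mem_tail_succ (by omega) (ih hx) y

end Lnr

theorem stmt_9_general (n r : ℕ) (hn : 5 ≤ n)
    (hrn : r ≤ 2 * ((n - 1) / 2) - 1) :
    lcs n (sLnr n r) (n - 3) ≠ ⊥ ∧ lcs n (sLnr n r) (n - 2) = ⊥ := by
  constructor
  · intro hbot
    have hmem : E n (n - 3 + 1) ∈ lcs n (sLnr n r) (n - 3) := E_succ_mem_lcs le_rfl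
    rw [hbot, Submodule.mem_bot] at hmem
    exact E_ne_zero (by omega) hmem
  · have hle : lcs n (sLnr n r) (n - 3) ≤ tail n (n - 2) := by
      obtain ⟨m, rfl⟩ : ∃ m, n = m + 4 := ⟨n - 4, by omega⟩
      exact lcs_succ_le_tail m
    have hk : n - 2 = n - 3 + 1 := by omega
    rw [hk, eq_bot_iff]
    exact lcs_succ_le fun x hx y => (Submodule.mem_bot ℂ).mpr <|
      brkt_eq_zero_of_mem_tail (by omega) (hle hx) y

/-- `L_{n,r}` is nilpotent of nilindex exactly `n-2` (quasi-filiform):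
`g_{n-2} = lcs (n-3) ≠ 0` and `g_{n-1} = lcs (n-2) = 0`. -/
theorem stmt_9 (n r : ℕ) (hn : 5 ≤ n) (hr : Odd r) (hr3 : 3 ≤ r)
    (hrn : r ≤ 2 * ((n - 1) / 2) - 1) :
    lcs n (sLnr n r) (n - 3) ≠ ⊥ ∧ lcs n (sLnr n r) (n - 2) = ⊥ :=
  stmt_9_general n r hn hrn
end
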